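/- Let H and K be real inner product spaces, let D : H → K be a linear map, let φ_1, …, φ_R be an orthonormal family in H with span X_R and orthogonal projection Π_R v := Σ_{i=1}^R ⟨v, φ_i⟩ φ_i, and define the symmetric R×R matrix S by S_{ii'} = ⟨φ_i, φ_{i'}⟩_H + ⟨Dφ_i, Dφ_{i'}⟩_K. Then for all w, u ∈ H, ‖D(w − Π_R w)‖ ≤ ‖D(w − u)‖ + ‖S‖₂^{1/2} ‖w − u‖ + ‖D(u − Π_R u)‖, where ‖S‖₂ denotes the spectral norm of S. Consequently ‖D(w − Π_R w)‖² ≤ 4‖D(w − u)‖² + 4‖S‖₂‖w − u‖² + 2‖D(u − Π_R u)‖². -/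

import Mathlib

open RealInnerProductSpace

/-- The spectral norm of a real `R × R` matrix: the operator norm of the
associated linear map on Euclidean space. -/
noncomputable def matrixSpectralNorm {R : ℕ} (S : Matrix (Fin R) (Fin R) ℝ) : ℝ :=
  ‖(Matrix.toEuclideanCLM (𝕜 := ℝ) S :
      EuclideanSpace ℝ (Fin R) →L[ℝ] EuclideanSpace ℝ (Fin R))‖

/-!
The error splits as `w - Π w = (w - u) + Π (u - w) + (u - Π u)`. Only the middle term needs an
argument: writing `c = (⟪v, φ i⟫)ᵢ` for `v = u - w`, the matrix `S` is the sum of the Gram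
matrices of `φ` and of `D ∘ φ`, so `‖Π v‖² + ‖D (Π v)‖² = cᵀ S c ≤ ‖S‖₂ ‖c‖² ≤ ‖S‖₂ ‖v‖²`,
the last step being Bessel's inequality.
-/

open Matrix WithLp

lemma matrixSpectralNorm_nonneg {R : ℕ} (S : Matrix (Fin R) (Fin R) ℝ) :
    0 ≤ matrixSpectralNorm S :=
  norm_nonneg _

lemma dotProduct_mulVec_self_le_matrixSpectralNorm {R : ℕ} (S : Matrix (Fin R) (Fin R) ℝ)
    (x : Fin R → ℝ) : x ⬝ᵥ S *ᵥ x ≤ matrixSpectralNorm S * ‖toLp 2 x‖ ^ 2 :=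
  calc x ⬝ᵥ S *ᵥ x = ⟪toLp 2 x, toEuclideanCLM (𝕜 := ℝ) S (toLp 2 x)⟫ :=
        (inner_toEuclideanCLM S _ _).symm
    _ ≤ ‖toLp 2 x‖ * ‖toEuclideanCLM (𝕜 := ℝ) S (toLp 2 x)‖ := real_inner_le_norm _ _
    _ ≤ ‖toLp 2 x‖ * (matrixSpectralNorm S * ‖toLp 2 x‖) := by
        gcongr; exact ContinuousLinearMap.le_opNorm _ _
    _ = matrixSpectralNorm S * ‖toLp 2 x‖ ^ 2 := by ring

section

variable {H K ι : Type*} [NormedAddCommGroup H] [InnerProductSpace ℝ H]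
  [NormedAddCommGroup K] [InnerProductSpace ℝ K] [Fintype ι]

lemma dotProduct_gram_add_gram_comp_mulVec (D : H →ₗ[ℝ] K) (φ : ι → H) (x : ι → ℝ) :
    x ⬝ᵥ (gram ℝ φ + gram ℝ (D ∘ φ)) *ᵥ x =
      ‖∑ i, x i • φ i‖ ^ 2 + ‖D (∑ i, x i • φ i)‖ ^ 2 := by
  have hφ := star_dotProduct_gram_mulVec (𝕜 := ℝ) φ x x
  have hDφ := star_dotProduct_gram_mulVec (𝕜 := ℝ) (D ∘ φ) x x
  rw [star_trivial] at hφ hDφ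
  rw [add_mulVec, dotProduct_add, hφ, hDφ, map_sum, real_inner_self_eq_norm_sq,
    real_inner_self_eq_norm_sq]
  simp only [Function.comp_apply, map_smul]

lemma Orthonormal.norm_toLp_inner_le {φ : ι → H} (hφ : Orthonormal ℝ φ) (v : H) :
    ‖toLp 2 (fun i ↦ ⟪v, φ i⟫)‖ ≤ ‖v‖ := by
  refine pow_le_pow_iff_left₀ (norm_nonneg _) (norm_nonneg _) two_ne_zero |>.mp ?_
  rw [EuclideanSpace.norm_sq_eq]
  simpa only [real_inner_comm] using hφ.sum_inner_products_le (s := Finset.univ) v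

lemma norm_apply_sum_inner_smul_le (D : H →ₗ[ℝ] K) {R : ℕ} {φ : Fin R → H}
    (hφ : Orthonormal ℝ φ) (v : H) :
    ‖D (∑ i, ⟪v, φ i⟫ • φ i)‖ ≤
      Real.sqrt (matrixSpectralNorm (gram ℝ φ + gram ℝ (D ∘ φ))) * ‖v‖ := by
  set S := gram ℝ φ + gram ℝ (D ∘ φ)
  have hsq : ‖D (∑ i, ⟪v, φ i⟫ • φ i)‖ ^ 2 ≤ matrixSpectralNorm S * ‖v‖ ^ 2 :=
    calc ‖D (∑ i, ⟪v, φ i⟫ • φ i)‖ ^ 2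
        ≤ ‖∑ i, ⟪v, φ i⟫ • φ i‖ ^ 2 + ‖D (∑ i, ⟪v, φ i⟫ • φ i)‖ ^ 2 :=
          le_add_of_nonneg_left (sq_nonneg _)
      _ = (fun i ↦ ⟪v, φ i⟫) ⬝ᵥ S *ᵥ (fun i ↦ ⟪v, φ i⟫) :=
          (dotProduct_gram_add_gram_comp_mulVec D φ _).symm
      _ ≤ matrixSpectralNorm S * ‖toLp 2 (fun i ↦ ⟪v, φ i⟫)‖ ^ 2 :=
          dotProduct_mulVec_self_le_matrixSpectralNorm S _
      _ ≤ matrixSpectralNorm S * ‖v‖ ^ 2 := by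
          gcongr
          · exact matrixSpectralNorm_nonneg S
          · exact hφ.norm_toLp_inner_le v
  refine pow_le_pow_iff_left₀ (norm_nonneg _) (by positivity) two_ne_zero |>.mp ?_
  rwa [mul_pow, Real.sq_sqrt (matrixSpectralNorm_nonneg S)]

end

lemma add_add_sq_le (a b c : ℝ) : (a + b + c) ^ 2 ≤ 4 * a ^ 2 + 4 * b ^ 2 + 2 * c ^ 2 := by
  nlinarith [sq_nonneg (a - b), sq_nonneg (a + b - c)]

/-- The D-seminorm (H¹) splitting inequality for the POD projection: with `φ₁, …, φ_R`
an orthonormal family in `H`, `Π_R v = Σ_{i=1}^R ⟨v, φ_i⟩ φ_i`, `D : H → K` linear, and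
`S` the matrix with entries `S_{ii'} = ⟨φ_i, φ_{i'}⟩ + ⟨Dφ_i, Dφ_{i'}⟩`, one has for all
`w, u ∈ H`:
`‖D(w − Π_R w)‖ ≤ ‖D(w − u)‖ + ‖S‖₂^{1/2} ‖w − u‖ + ‖D(u − Π_R u)‖`, and consequently
`‖D(w − Π_R w)‖² ≤ 4‖D(w − u)‖² + 4‖S‖₂‖w − u‖² + 2‖D(u − Π_R u)‖²`. -/
theorem pod_gradient_projection_error_splitting
    {H K : Type*} [NormedAddCommGroup H] [InnerProductSpace ℝ H]
    [NormedAddCommGroup K] [InnerProductSpace ℝ K]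
    (D : H →ₗ[ℝ] K) {R : ℕ} (φ : Fin R → H) (hortho : Orthonormal ℝ φ)
    (S : Matrix (Fin R) (Fin R) ℝ)
    (hS : ∀ i i' : Fin R, S i i' = ⟪φ i, φ i'⟫ + ⟪D (φ i), D (φ i')⟫)
    (P : H → H) (hP : ∀ v, P v = ∑ i, ⟪v, φ i⟫ • φ i)
    (w u : H) :
    ‖D (w - P w)‖ ≤
        ‖D (w - u)‖ + Real.sqrt (matrixSpectralNorm S) * ‖w - u‖ + ‖D (u - P u)‖ ∧
      ‖D (w - P w)‖ ^ 2 ≤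
        4 * ‖D (w - u)‖ ^ 2 + 4 * matrixSpectralNorm S * ‖w - u‖ ^ 2
          + 2 * ‖D (u - P u)‖ ^ 2 := by
  have hS_gram : S = gram ℝ φ + gram ℝ (D ∘ φ) := Matrix.ext hS
  have hP_sub : P u - P w = ∑ i, ⟪u - w, φ i⟫ • φ i := by
    simp only [hP, inner_sub_left, sub_smul, Finset.sum_sub_distrib]
  have hmid : ‖D (P u - P w)‖ ≤ Real.sqrt (matrixSpectralNorm S) * ‖w - u‖ := by
    rw [hP_sub, hS_gram, norm_sub_rev w u]
    exact norm_apply_sum_inner_smul_le D hortho (u - w)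
  have hsplit : ‖D (w - P w)‖ ≤
      ‖D (w - u)‖ + Real.sqrt (matrixSpectralNorm S) * ‖w - u‖ + ‖D (u - P u)‖ :=
    calc ‖D (w - P w)‖ = ‖D (w - u) + D (P u - P w) + D (u - P u)‖ := by
          rw [← map_add, ← map_add]; congr 2; abel
      _ ≤ ‖D (w - u)‖ + ‖D (P u - P w)‖ + ‖D (u - P u)‖ := norm_add₃_le
      _ ≤ _ := by gcongr
  refine ⟨hsplit, ?_⟩
  calc ‖D (w - P w)‖ ^ 2
      ≤ (‖D (w - u)‖ + Real.sqrt (matrixSpectralNorm S) * ‖w - u‖ + ‖D (u - P u)‖) ^ 2 :=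
        pow_le_pow_left₀ (norm_nonneg _) hsplit 2
    _ ≤ _ := add_add_sq_le _ _ _
    _ = _ := by rw [mul_pow, Real.sq_sqrt (matrixSpectralNorm_nonneg S)]; ring
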